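/- Let 0 < γ < 1. Suppose R₁, R₂, Q₁, Q₂ ≥ 0 with R₁ + Q₁ > 0 and R₂ + Q₂ > 0, and suppose R₁ ≤ R₂ and Q₁ ≤ Q₂. If Z₁ and Z₂ are the corresponding values Z(R₁,Q₁) and Z(R₂,Q₂), then Z₁ ≤ Z₂. -/

import Mathlib

/-! On `x > 0`, `x ^ γ - R * x ^ (γ - 1)` is strictly increasing in `x` and decreasing in `R`, so
`f_{R₂}(Z₁) ≤ f_{R₁}(Z₁) = Q₁ ≤ Q₂ = f_{R₂}(Z₂)` forces `Z₁ ≤ Z₂`. -/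

open Real

section

variable {γ : ℝ}

lemma strictMonoOn_rpow_sub_mul_rpow_sub_one (hγ0 : 0 < γ) (hγ1 : γ ≤ 1) {R : ℝ} (hR : 0 ≤ R) :
    StrictMonoOn (fun x : ℝ => x ^ γ - R * x ^ (γ - 1)) (Set.Ioi 0) := by
  intro x hx y _ hxy
  have hpow : x ^ γ < y ^ γ := rpow_lt_rpow (le_of_lt hx) hxy hγ0
  have hpow_sub_one : y ^ (γ - 1) ≤ x ^ (γ - 1) :=
    rpow_le_rpow_of_nonpos hx hxy.le (by linarith)
  have := mul_le_mul_of_nonneg_left hpow_sub_one hR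
  dsimp only
  linarith

lemma rpow_sub_mul_rpow_sub_one_le_of_le {x : ℝ} (hx : 0 ≤ x) {R₁ R₂ : ℝ} (hRR : R₁ ≤ R₂) :
    x ^ γ - R₂ * x ^ (γ - 1) ≤ x ^ γ - R₁ * x ^ (γ - 1) := by
  have := mul_le_mul_of_nonneg_right hRR (rpow_nonneg hx (γ - 1))
  linarith

end

theorem bifluid_Z_monotone_general
    (γ : ℝ) (hγ0 : 0 < γ) (hγ1 : γ < 1)
    (R₁ R₂ Q₁ Q₂ Z₁ Z₂ : ℝ)
    (hR₂ : 0 ≤ R₂)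
    (hRR : R₁ ≤ R₂) (hQQ : Q₁ ≤ Q₂)
    (hZ₁pos : 0 < Z₁) (hZ₁ : Z₁ ^ γ - R₁ * Z₁ ^ (γ - 1) = Q₁)
    (hZ₂pos : 0 < Z₂) (hZ₂ : Z₂ ^ γ - R₂ * Z₂ ^ (γ - 1) = Q₂) :
    Z₁ ≤ Z₂ := by
  have hmono := strictMonoOn_rpow_sub_mul_rpow_sub_one hγ0 hγ1.le hR₂
  refine (hmono.le_iff_le hZ₁pos hZ₂pos).mp ?_
  calc Z₁ ^ γ - R₂ * Z₁ ^ (γ - 1)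
      ≤ Z₁ ^ γ - R₁ * Z₁ ^ (γ - 1) := rpow_sub_mul_rpow_sub_one_le_of_le hZ₁pos.le hRR
    _ = Q₁ := hZ₁
    _ ≤ Q₂ := hQQ
    _ = Z₂ ^ γ - R₂ * Z₂ ^ (γ - 1) := hZ₂.symm

theorem bifluid_Z_monotone
    (γ : ℝ) (hγ0 : 0 < γ) (hγ1 : γ < 1)
    (R₁ R₂ Q₁ Q₂ Z₁ Z₂ : ℝ)
    (hR₁ : 0 ≤ R₁) (hR₂ : 0 ≤ R₂) (hQ₁ : 0 ≤ Q₁) (hQ₂ : 0 ≤ Q₂)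
    (hRQ₁ : 0 < R₁ + Q₁) (hRQ₂ : 0 < R₂ + Q₂)
    (hRR : R₁ ≤ R₂) (hQQ : Q₁ ≤ Q₂)
    (hZ₁pos : 0 < Z₁) (hZ₁ : Z₁ ^ γ - R₁ * Z₁ ^ (γ - 1) = Q₁)
    (hZ₂pos : 0 < Z₂) (hZ₂ : Z₂ ^ γ - R₂ * Z₂ ^ (γ - 1) = Q₂) :
    Z₁ ≤ Z₂ :=
  bifluid_Z_monotone_general γ hγ0 hγ1 R₁ R₂ Q₁ Q₂ Z₁ Z₂ hR₂ hRR hQQ hZ₁pos hZ₁ hZ₂pos hZ₂
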